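/- Let a, b ≥ 0 with a + b ≥ 1, and let w be any binary word of length a + b + 2 containing exactly a + 2 ones. Then 4·(value of 111 0^b 1^a) < 7·(value of 1 w), where both words have length a + b + 3. -/

import Mathlib

/-
Both words start with a `1` and have the same length, so their leading parts `7 · 2^(a+b)`
and `2^(a+b+2)` match up to the factors `4` and `7`. The tail `1^a` of the left word is worth
`2^a - 1`, while `w`, having `a + 2` ones, is worth at least `2^(a+2) - 1` (all its ones at
the end). Hence the comparison reduces to `4 (2^a - 1) < 7 (4 · 2^a - 1)`.
-/

/-- Base-2 value of a binary word (most significant bit first). -/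
def val (w : List Bool) : ℕ :=
  w.foldl (fun n b => 2 * n + b.toNat) 0

lemma foldl_eq_mul_two_pow_add_val (w : List Bool) (n : ℕ) :
    w.foldl (fun n b => 2 * n + b.toNat) n = n * 2 ^ w.length + val w := by
  induction w generalizing n with
  | nil => simp [val]
  | cons b t ih =>
    simp only [List.foldl_cons, List.length_cons, val]
    rw [ih, ih (2 * 0 + b.toNat)]
    ring

lemma val_cons (b : Bool) (w : List Bool) :
    val (b :: w) = b.toNat * 2 ^ w.length + val w := by
  simpa [val] using foldl_eq_mul_two_pow_add_val w b.toNat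

lemma val_append (x y : List Bool) :
    val (x ++ y) = val x * 2 ^ y.length + val y := by
  simpa [val, List.foldl_append] using foldl_eq_mul_two_pow_add_val y (val x)

lemma val_replicate_false (n : ℕ) : val (List.replicate n false) = 0 := by
  induction n with
  | zero => rfl
  | succ k ih => simp [List.replicate_succ, val_cons, ih]

lemma val_replicate_true_add_one (n : ℕ) : val (List.replicate n true) + 1 = 2 ^ n := by
  induction n with
  | zero => rfl
  | succ k ih =>
    rw [List.replicate_succ, val_cons, List.length_replicate, pow_succ, ← ih]
    simp only [Bool.toNat_true]
    ring

lemma two_pow_count_true_le_val_add_one (w : List Bool) : 2 ^ w.count true ≤ val w + 1 := by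
  induction w with
  | nil => simp [val]
  | cons b t ih =>
    cases b with
    | false => simpa [val_cons] using ih
    | true =>
      have hpow : 2 ^ t.count true ≤ 2 ^ t.length :=
        Nat.pow_le_pow_right two_pos List.count_le_length
      rw [List.count_cons_self, val_cons, Bool.toNat_true, pow_succ]
      omega

theorem stmt8_general (a b : ℕ)
    (w : List Bool) (hl : w.length = a + b + 2) (hc : w.count true = a + 2) :
    4 * val ([true, true, true] ++ List.replicate b false ++ List.replicate a true) <
      7 * val ([true] ++ w) := by
  have hw := two_pow_count_true_le_val_add_one w
  have htail := val_replicate_true_add_one a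
  rw [hc] at hw
  rw [val_append, val_append, val_append, val_replicate_false, hl]
  simp only [List.length_replicate]
  have h111 : val [true, true, true] = 7 := rfl
  have h1 : val [true] = 1 := rfl
  rw [h111, h1]
  have ha : 1 ≤ 2 ^ a := Nat.one_le_two_pow
  rw [pow_add, pow_add] at *
  nlinarith

theorem stmt8 (a b : ℕ) (hab : 1 ≤ a + b)
    (w : List Bool) (hl : w.length = a + b + 2) (hc : w.count true = a + 2) :
    4 * val ([true, true, true] ++ List.replicate b false ++ List.replicate a true) <
      7 * val ([true] ++ w) :=
  stmt8_general a b w hl hc
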